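/- Assume ℕA is normal, i.e., ℕA = ℤ^d ∩ ℝ_{≥0}A. Let F ⪯ A be a face and β ∈ ℂ^d. If λ, λ′ ∈ ℂF satisfy β−λ ∈ ℕA−ℕF and β−λ′ ∈ ℕA−ℕF, then λ − λ′ ∈ ℤF. In particular, the set E_F(β) := {λ + ℤF ∈ ℂF/ℤF : β−λ ∈ ℕA−ℕF} has at most one element. -/

import Mathlib

/-!
Common setup: `A` is a `d × n` integer matrix, given by its columns `a : Fin n → Lat d`,
with `ℤA = ℤ^d` (`SpansZ`) and `ℕA` pointed (`Pointed`).  Faces, semigroups, graded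
modules, quasidegree sets, the dualizing complex `ω•_{S_A}` and the Ishida complexes
`℧•_F` are formalized below; all cohomology statements are expressed via the
(ℤ^d-)graded components of these complexes.
-/

namespace GKZ

open scoped Classical

noncomputable section

abbrev Lat (d : ℕ) := Fin d → ℤ
abbrev CS (d : ℕ) := Fin d → ℂ
abbrev Laur (d : ℕ) := AddMonoidAlgebra ℂ (Lat d)

/-- Inclusion ℤ^d ⊆ ℂ^d. -/
def toC {d : ℕ} (α : Lat d) : CS d := fun i => (α i : ℂ)
/-- Inclusion ℤ^d ⊆ ℝ^d. -/
def toR {d : ℕ} (α : Lat d) : Fin d → ℝ := fun i => (α i : ℝ)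
/-- The monomial t^α in the Laurent polynomial ring ℂ[ℤ^d]. -/
def mono {d : ℕ} (α : Lat d) : Laur d := AddMonoidAlgebra.single α 1

variable {d n : ℕ}

/-- The affine semigroup ℕA generated by the columns of `A`. -/
def NA (a : Fin n → Lat d) : AddSubmonoid (Lat d) := AddSubmonoid.closure (Set.range a)

/-- ℕA is pointed: ℕA ∩ (−ℕA) = {0}. -/
def Pointed (a : Fin n → Lat d) : Prop := ∀ x ∈ NA a, -x ∈ NA a → x = 0

/-- ℤA = ℤ^d. -/
def SpansZ (a : Fin n → Lat d) : Prop :=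
  AddSubgroup.closure (Set.range a) = (⊤ : AddSubgroup (Lat d))

/-- The real cone ℝ₊F spanned by the columns indexed by `F`. -/
def cone (a : Fin n → Lat d) (F : Set (Fin n)) : Set (Fin d → ℝ) :=
  { x | ∃ c : Fin n → ℝ, (∀ i, 0 ≤ c i) ∧ (∀ i, i ∉ F → c i = 0) ∧ x = ∑ i, c i • toR (a i) }

/-- `F` is a face of `A`: ℝ₊F is a face of the cone ℝ₊A, and `F` consists of all the
columns of `A` lying on that face. -/
def IsFace (a : Fin n → Lat d) (F : Set (Fin n)) : Prop :=
  (∀ x y, x ∈ cone a Set.univ → y ∈ cone a Set.univ →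
      x + y ∈ cone a F → x ∈ cone a F ∧ y ∈ cone a F) ∧
  (∀ i, toR (a i) ∈ cone a F → i ∈ F)

/-- ℕF. -/
def NFace (a : Fin n → Lat d) (F : Set (Fin n)) : AddSubmonoid (Lat d) :=
  AddSubmonoid.closure (a '' F)

/-- ℤF. -/
def ZFace (a : Fin n → Lat d) (F : Set (Fin n)) : AddSubgroup (Lat d) :=
  AddSubgroup.closure (a '' F)

/-- ℂF ⊆ ℂ^d. -/
def CFace (a : Fin n → Lat d) (F : Set (Fin n)) : Submodule ℂ (CS d) :=
  Submodule.span ℂ (toC '' (a '' F))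

/-- d_F, the rank of ℤF. -/
def dimF (a : Fin n → Lat d) (F : Set (Fin n)) : ℕ :=
  Module.finrank ℤ (Submodule.span ℤ (a '' F))

/-- σ_F, the sum of the columns of F. -/
def sigmaF (a : Fin n → Lat d) (F : Set (Fin n)) : Lat d :=
  ∑ i : Fin n, if i ∈ F then a i else 0

/-- ε_A = a_1 + ⋯ + a_n. -/
def epsA (a : Fin n → Lat d) : Lat d := ∑ i : Fin n, a i

/-- ℕA − ℕF ⊆ ℤ^d. -/
def NAmNF (a : Fin n → Lat d) (F : Set (Fin n)) : Set (Lat d) :=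
  {γ | ∃ u ∈ NA a, ∃ v ∈ NFace a F, γ = u - v}

/-- ℕF − ℕA ⊆ ℤ^d. -/
def NFmNA (a : Fin n → Lat d) (F : Set (Fin n)) : Set (Lat d) :=
  {γ | ∃ u ∈ NFace a F, ∃ v ∈ NA a, γ = u - v}

/-- ℕF − ℕH ⊆ ℤ^d. -/
def NFmNH (a : Fin n → Lat d) (F H : Set (Fin n)) : Set (Lat d) :=
  {γ | ∃ u ∈ NFace a F, ∃ v ∈ NFace a H, γ = u - v}

/-- ℕA is normal: ℕA = ℤ^d ∩ ℝ₊A. -/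
def Normal (a : Fin n → Lat d) : Prop :=
  ∀ γ : Lat d, γ ∈ NA a ↔ toR γ ∈ cone a Set.univ

/-- The Zariski closure of a subset of ℂ^d. -/
def zClosure {d : ℕ} (T : Set (CS d)) : Set (CS d) :=
  {x | ∀ p : MvPolynomial (Fin d) ℂ, (∀ y ∈ T, MvPolynomial.eval y p = 0) →
    MvPolynomial.eval x p = 0}

def IsZClosed {d : ℕ} (Z : Set (CS d)) : Prop := zClosure Z ⊆ Z

/-- Irreducibility of a subset of ℂ^d in the Zariski topology. -/
def ZIrred {d : ℕ} (Z : Set (CS d)) : Prop :=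
  Z.Nonempty ∧ ∀ C₁ C₂ : Set (CS d), IsZClosed C₁ → IsZClosed C₂ →
    Z ⊆ C₁ ∪ C₂ → Z ⊆ C₁ ∨ Z ⊆ C₂

/-- Krull (topological) dimension of a subset of ℂ^d with the Zariski topology:
the Krull dimension of the poset of irreducible Zariski-closed subsets contained in it. -/
def zdim {d : ℕ} (Z : Set (CS d)) : WithBot ℕ∞ :=
  Order.krullDim {C : Set (CS d) // C ⊆ Z ∧ IsZClosed C ∧ ZIrred C}

/-- `Z` is an irreducible component of `W`: a maximal irreducible Zariski-closed subset. -/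
def IsIrredComp {d : ℕ} (Z W : Set (CS d)) : Prop :=
  Z ⊆ W ∧ IsZClosed Z ∧ ZIrred Z ∧
    ∀ Z' : Set (CS d), IsZClosed Z' → ZIrred Z' → Z ⊆ Z' → Z' ⊆ W → Z' = Z

/-- The type of faces of `A`. -/
def FaceT (a : Fin n → Lat d) := {G : Set (Fin n) // IsFace a G}

instance (a : Fin n → Lat d) : Finite (FaceT a) := by
  unfold FaceT; infer_instance

noncomputable instance (a : Fin n → Lat d) : Fintype (FaceT a) := Fintype.ofFinite _

/-- Degree set of the localization M[∂^{−G}] of the monomial module with degree set `E`: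
the set E − ℕG. -/
def locE (a : Fin n → Lat d) (E : Set (Lat d)) (G : Set (Fin n)) : Set (Lat d) :=
  {γ | ∃ f ∈ NFace a G, γ + f ∈ E}

/-- Functions supported on a subset, as a ℂ-submodule of the function space. -/
def funSupported {ι : Type*} (S : Set ι) : Submodule ℂ (ι → ℂ) where
  carrier := {c | ∀ i, i ∉ S → c i = 0}
  add_mem' := by
    intro x y hx hy i hi
    simp only [Set.mem_setOf_eq] at hx hy
    simp [Pi.add_apply, hx i hi, hy i hi]
  zero_mem' := by intro i _; rfl
  smul_mem' := by
    intro r x hx i hi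
    simp only [Set.mem_setOf_eq] at hx
    simp [Pi.smul_apply, hx i hi]

/-- The degree-γ part of the term of the Ishida complex ℧•_F(M) (base face `F`, monomial
module with degree set `E`) whose summands are indexed by the faces of absolute dimension
`j` (cohomological degree `j − d_F`): functions on the faces `G ⊇ F` with `d_G = j` and
`γ ∈ E − ℕG`. -/
def ishChain (a : Fin n → Lat d) (E : Set (Lat d)) (F : Set (Fin n)) (j : ℤ) (γ : Lat d) :
    Submodule ℂ (FaceT a → ℂ) :=
  funSupported {G : FaceT a | F ⊆ G.1 ∧ (dimF a G.1 : ℤ) = j ∧ γ ∈ locE a E G.1}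

/-- The differential of the Ishida complex (in each ℤ^d-degree): the component from a face
`G'` into a face `G''` covering it is `ε G' G''` times the natural localization map. -/
def ishDelta (a : Fin n → Lat d) (ε : Set (Fin n) → Set (Fin n) → ℂ) :
    (FaceT a → ℂ) →ₗ[ℂ] (FaceT a → ℂ) where
  toFun c := fun G'' => ∑ G' : FaceT a,
    if G'.1 ⊆ G''.1 ∧ dimF a G''.1 = dimF a G'.1 + 1 then ε G'.1 G''.1 * c G' else 0
  map_add' x y := by
    funext G''
    simp only [Pi.add_apply, ← Finset.sum_add_distrib]
    refine Finset.sum_congr rfl fun G' _ => ?_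
    by_cases h : G'.1 ⊆ G''.1 ∧ dimF a G''.1 = dimF a G'.1 + 1
    · simp [h, mul_add]
    · simp [h]
  map_smul' r x := by
    funext G''
    simp only [Pi.smul_apply, smul_eq_mul, RingHom.id_apply, Finset.mul_sum]
    refine Finset.sum_congr rfl fun G' _ => ?_
    by_cases h : G'.1 ⊆ G''.1 ∧ dimF a G''.1 = dimF a G'.1 + 1
    · simp only [h, and_self, if_true]; ring
    · simp [h]

/-- Degree-γ cocycles of the Ishida complex at absolute dimension `j`. -/
def ishZ (a : Fin n → Lat d) (E : Set (Lat d)) (ε : Set (Fin n) → Set (Fin n) → ℂ)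
    (F : Set (Fin n)) (j : ℤ) (γ : Lat d) : Submodule ℂ (FaceT a → ℂ) :=
  ishChain a E F j γ ⊓ LinearMap.ker (ishDelta a ε)

/-- Degree-γ coboundaries of the Ishida complex at absolute dimension `j`. -/
def ishB (a : Fin n → Lat d) (E : Set (Lat d)) (ε : Set (Fin n) → Set (Fin n) → ℂ)
    (F : Set (Fin n)) (j : ℤ) (γ : Lat d) : Submodule ℂ (FaceT a → ℂ) :=
  Submodule.map (ishDelta a ε) (ishChain a E F (j - 1) γ)

/-- The degree-γ component of the cohomology of the Ishida complex ℧•_F(M) at absolute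
dimension `j` (cohomological degree `j − d_F`). -/
abbrev ishH (a : Fin n → Lat d) (E : Set (Lat d)) (ε : Set (Fin n) → Set (Fin n) → ℂ)
    (F : Set (Fin n)) (j : ℤ) (γ : Lat d) :=
  ↥(ishZ a E ε F j γ) ⧸
    Submodule.comap (ishZ a E ε F j γ).subtype (ishB a E ε F j γ)

/-- Nonvanishing of the degree-γ component of the cohomology of the Ishida complex. -/
def ishHne (a : Fin n → Lat d) (E : Set (Lat d)) (ε : Set (Fin n) → Set (Fin n) → ℂ)
    (F : Set (Fin n)) (j : ℤ) (γ : Lat d) : Prop :=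
  ¬ (ishZ a E ε F j γ ≤ ishB a E ε F j γ)

/-- Degree-γ part of the term of ω•_{S_A} in cohomological degree `i`:
functions on the faces `G` with `d_{A/G} = i` and `γ ∈ ℕG − ℕA`. -/
def omChain (a : Fin n → Lat d) (i : ℤ) (γ : Lat d) : Submodule ℂ (FaceT a → ℂ) :=
  funSupported {G : FaceT a | (dimF a G.1 : ℤ) = (d : ℤ) - i ∧ γ ∈ NFmNA a G.1}

/-- Degree-γ part of the differential of ω•_{S_A}: the component from a face `G'` to a face
`G''` covered by it is `ε G' G''` times the natural projection ℂ{ℕG'−ℕA} → ℂ{ℕG''−ℕA}. -/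
def omDelta (a : Fin n → Lat d) (ε : Set (Fin n) → Set (Fin n) → ℂ) (γ : Lat d) :
    (FaceT a → ℂ) →ₗ[ℂ] (FaceT a → ℂ) where
  toFun c := fun G'' =>
    if γ ∈ NFmNA a G''.1 then
      ∑ G' : FaceT a,
        if G''.1 ⊆ G'.1 ∧ dimF a G'.1 = dimF a G''.1 + 1 then ε G'.1 G''.1 * c G' else 0
    else 0
  map_add' x y := by
    funext G''
    by_cases hγ : γ ∈ NFmNA a G''.1
    · simp only [Pi.add_apply, hγ, if_true, ← Finset.sum_add_distrib]
      refine Finset.sum_congr rfl fun G' _ => ?_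
      by_cases h : G''.1 ⊆ G'.1 ∧ dimF a G'.1 = dimF a G''.1 + 1
      · simp [h, mul_add]
      · simp [h]
    · simp [hγ]
  map_smul' r x := by
    funext G''
    by_cases hγ : γ ∈ NFmNA a G''.1
    · simp only [Pi.smul_apply, smul_eq_mul, RingHom.id_apply, hγ, if_true, Finset.mul_sum]
      refine Finset.sum_congr rfl fun G' _ => ?_
      by_cases h : G''.1 ⊆ G'.1 ∧ dimF a G'.1 = dimF a G''.1 + 1
      · simp only [h, and_self, if_true]; ring
      · simp [h]
    · simp [hγ]

/-- Degree-γ cocycles of ω•_{S_A} in cohomological degree `i`. -/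
def omZ (a : Fin n → Lat d) (ε : Set (Fin n) → Set (Fin n) → ℂ) (i : ℤ) (γ : Lat d) :
    Submodule ℂ (FaceT a → ℂ) :=
  omChain a i γ ⊓ LinearMap.ker (omDelta a ε γ)

/-- Degree-γ coboundaries of ω•_{S_A} in cohomological degree `i`. -/
def omB (a : Fin n → Lat d) (ε : Set (Fin n) → Set (Fin n) → ℂ) (i : ℤ) (γ : Lat d) :
    Submodule ℂ (FaceT a → ℂ) :=
  Submodule.map (omDelta a ε γ) (omChain a (i - 1) γ)

/-- Nonvanishing of H^i(ω•_{S_A})_γ. -/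
def omHne (a : Fin n → Lat d) (ε : Set (Fin n) → Set (Fin n) → ℂ) (i : ℤ) (γ : Lat d) : Prop :=
  ¬ (omZ a ε i γ ≤ omB a ε i γ)

/-- A ℤ^d-graded S_A-module, presented by its grading together with the (degree-shifting)
action of the monomials t^u, u ∈ ℕA. -/
structure GradedSAMod (a : Fin n → Lat d) (M : Type) [AddCommGroup M] [Module ℂ M] where
  decomp : Lat d → Submodule ℂ M
  internal : DirectSum.IsInternal decomp
  act : (u : Lat d) → u ∈ NA a → (M →ₗ[ℂ] M)
  act_zero : ∀ h0 : (0 : Lat d) ∈ NA a, act 0 h0 = LinearMap.id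
  act_add : ∀ (u : Lat d) (hu : u ∈ NA a) (v : Lat d) (hv : v ∈ NA a) (huv : u + v ∈ NA a),
    act (u + v) huv = (act u hu).comp (act v hv)
  act_grade : ∀ (u : Lat d) (hu : u ∈ NA a) (γ : Lat d), ∀ m ∈ decomp γ,
    act u hu m ∈ decomp (γ + u)

/-- Finite generation over S_A. -/
def GradedSAMod.FGmod {a : Fin n → Lat d} {M : Type} [AddCommGroup M] [Module ℂ M]
    (g : GradedSAMod a M) : Prop :=
  ∃ S : Finset M, ∀ m : M,
    m ∈ Submodule.span ℂ {x | ∃ u, ∃ hu : u ∈ NA a, ∃ s ∈ S, x = g.act u hu s}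

/-- Degrees of nonzero homogeneous elements of `M` that survive in the localization
`M[∂^{−H}]` (i.e. are killed by no power of t^{σ_H}). -/
def GradedSAMod.survTdeg {a : Fin n → Lat d} {M : Type} [AddCommGroup M] [Module ℂ M]
    (g : GradedSAMod a M) (H : Set (Fin n)) : Set (Lat d) :=
  {γ | ∃ m ∈ g.decomp γ, m ≠ 0 ∧ ∀ (k : ℕ) (hk : k • sigmaF a H ∈ NA a), g.act _ hk m ≠ 0}

/-- The quasidegree set of the localization `M[∂^{−H}]` of a finitely generated graded
module `M`: the union over `k` of the Zariski closures of the true degree sets of the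
finitely generated graded submodules t^{−kσ_H}·M of the localization. -/
def GradedSAMod.qdegLoc {a : Fin n → Lat d} {M : Type} [AddCommGroup M] [Module ℂ M]
    (g : GradedSAMod a M) (H : Set (Fin n)) : Set (CS d) :=
  ⋃ k : ℕ, zClosure (toC '' {γ : Lat d | γ + k • sigmaF a H ∈ g.survTdeg H})

/-- A ℂ-submodule is graded: it is spanned by its homogeneous elements. -/
def IsGradedSubC {d : ℕ} {M : Type} [AddCommGroup M] [Module ℂ M]
    (decomp : Lat d → Submodule ℂ M) (N : Submodule ℂ M) : Prop :=
  N = Submodule.span ℂ ((N : Set M) ∩ ⋃ γ : Lat d, (decomp γ : Set M))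

/-- A ℂ-submodule is an S_A-submodule: stable under the monomial action. -/
def IsStableSub {a : Fin n → Lat d} {M : Type} [AddCommGroup M] [Module ℂ M]
    (g : GradedSAMod a M) (N : Submodule ℂ M) : Prop :=
  ∀ (u : Lat d) (hu : u ∈ NA a), ∀ m ∈ N, g.act u hu m ∈ N

/-- The semigroup ring S_A = ℂ[ℕA] as a subalgebra of ℂ[ℤ^d]. -/
def SAlg (a : Fin n → Lat d) : Subalgebra ℂ (Laur d) :=
  Algebra.adjoin ℂ {x | ∃ α ∈ NA a, x = mono α}

/-- The monomial t^u, u ∈ ℕA, as an element of S_A. -/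
def smono (a : Fin n → Lat d) (u : Lat d) (hu : u ∈ NA a) : ↥(SAlg a) :=
  ⟨mono u, Algebra.subset_adjoin ⟨u, hu, rfl⟩⟩

/-- The underlying ℂ-vector space of the monomial module ℂ{E}: finitely supported
functions on `E`. -/
abbrev wMod (d : ℕ) (E : Set (Lat d)) := ↥(Finsupp.supported ℂ ℂ E)

/-- The action of the monomial t^w on ℂ{E}: shift the degree by `w`, truncate back to `E`. -/
def wAct {d : ℕ} (E : Set (Lat d)) (w : Lat d) : wMod d E →ₗ[ℂ] wMod d E :=
  (Finsupp.restrictDom ℂ ℂ E).comp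
    ((Finsupp.lmapDomain ℂ ℂ (fun γ => γ + w)).comp (Finsupp.supported ℂ ℂ E).subtype)

/-- The elements annihilated by some power of the ideal generated by the t^{a_i}, i ∉ F. -/
def torsionAt (a : Fin n → Lat d) (F : Set (Fin n)) {ML : Type} [AddCommGroup ML]
    [Module ℂ ML] (TL : (u : Lat d) → u ∈ NA a → (ML →ₗ[ℂ] ML)) : Set ML :=
  {y | ∃ k : ℕ, ∀ f : Fin k → Fin n, (∀ j, f j ∉ F) →
    ∀ h : (∑ j, a (f j)) ∈ NA a, TL (∑ j, a (f j)) h y = 0}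

/-- The toric ideal I_A ⊆ R_A = ℂ[∂_1,…,∂_n]. -/
def toricIdeal (a : Fin n → Lat d) : Ideal (MvPolynomial (Fin n) ℂ) :=
  RingHom.ker (MvPolynomial.aeval (fun i => mono (a i)) : MvPolynomial (Fin n) ℂ →ₐ[ℂ] Laur d)

/-- The ideal I_F^A = I_A + ⟨∂_i : a_i ∉ F⟩ of R_A. -/
def IFA (a : Fin n → Lat d) (F : Set (Fin n)) : Ideal (MvPolynomial (Fin n) ℂ) :=
  toricIdeal a ⊔ Ideal.span {p | ∃ i, i ∉ F ∧ p = MvPolynomial.X i}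

/-- An R_A-submodule is graded: it is spanned by its homogeneous elements. -/
def IsGradedSubR {d n : ℕ} {M : Type} [AddCommGroup M] [Module ℂ M]
    [Module (MvPolynomial (Fin n) ℂ) M]
    (decomp : Lat d → Submodule ℂ M) (N : Submodule (MvPolynomial (Fin n) ℂ) M) : Prop :=
  N = Submodule.span (MvPolynomial (Fin n) ℂ) ((N : Set M) ∩ ⋃ γ : Lat d, (decomp γ : Set M))

/-- `h` is the primitive integral support function of the facet `G`. -/
def IsPISF (a : Fin n → Lat d) (G : Set (Fin n)) (h : Lat d →ₗ[ℤ] ℤ) : Prop :=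
  (∃ x, h x = 1) ∧ (∀ i, 0 ≤ h (a i)) ∧ (∀ i, h (a i) = 0 ↔ i ∈ G)

/-- The ℂ-linear extension of an integral linear form to ℂ^d. -/
def hC {d : ℕ} (h : Lat d →ₗ[ℤ] ℤ) (β : CS d) : ℂ :=
  ∑ j : Fin d, β j * ((h (Pi.single j 1) : ℤ) : ℂ)

/-! An integer point `z` of `ℂF` has real coordinates with respect to the columns of `F`
(take real parts), so `z + N σ_F` lies in the cone `ℝ₊F` for `N` large.  By normality it then
lies in `ℕA`, and since `ℝ₊F` is a face, an element of `ℕA` on `ℝ₊F` is a sum of columns of `F`.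
Thus `z + N σ_F ∈ ℕF` and `z ∈ ℤF`.  For the theorem take `z = γ' − γ`, where
`γ, γ'` are integer points with `β − λ = γ` and `β − λ' = γ'`. -/

lemma toR_add (x y : Lat d) : toR (x + y) = toR x + toR y := by
  funext j; simp [toR]

lemma toR_nsmul (N : ℕ) (x : Lat d) : toR (N • x) = (N : ℝ) • toR x := by
  funext j; simp [toR]

lemma toR_sigmaF (a : Fin n → Lat d) (F : Set (Fin n)) :
    toR (sigmaF a F) = ∑ i, (if i ∈ F then (1 : ℝ) else 0) • toR (a i) := by
  funext j
  simp only [sigmaF, toR, Finset.sum_apply, Int.cast_sum]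
  refine Finset.sum_congr rfl fun i _ => ?_
  split_ifs <;> simp [toR]

lemma toC_sub (x y : Lat d) : toC (x - y) = toC x - toC y := by
  funext j; simp [toC]

lemma zero_mem_cone (a : Fin n → Lat d) (F : Set (Fin n)) : 0 ∈ cone a F :=
  ⟨0, fun _ => le_rfl, fun _ _ => rfl, by simp⟩

lemma add_mem_cone {a : Fin n → Lat d} {F : Set (Fin n)} {x y : Fin d → ℝ}
    (hx : x ∈ cone a F) (hy : y ∈ cone a F) : x + y ∈ cone a F := by
  obtain ⟨c, hc0, hcF, rfl⟩ := hx
  obtain ⟨c', hc0', hcF', rfl⟩ := hy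
  refine ⟨c + c', fun i => add_nonneg (hc0 i) (hc0' i),
    fun i hi => by simp [hcF i hi, hcF' i hi], ?_⟩
  simp [add_smul, Finset.sum_add_distrib]

lemma toR_mem_cone {a : Fin n → Lat d} {F : Set (Fin n)} {i : Fin n} (hi : i ∈ F) :
    toR (a i) ∈ cone a F := by
  refine ⟨Pi.single i 1, fun j => ?_, fun j hj => ?_, by simp [Pi.single_apply]⟩
  · by_cases h : j = i <;> simp [h]
  · simp [show j ≠ i from fun h => hj (h ▸ hi)]

lemma cone_mono (a : Fin n → Lat d) {F G : Set (Fin n)} (hFG : F ⊆ G) : cone a F ⊆ cone a G := by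
  rintro x ⟨c, hc0, hcF, rfl⟩
  exact ⟨c, hc0, fun i hi => hcF i fun h => hi (hFG h), rfl⟩

lemma toR_mem_cone_univ_of_mem_NA {a : Fin n → Lat d} {u : Lat d} (hu : u ∈ NA a) :
    toR u ∈ cone a Set.univ := by
  induction hu using AddSubmonoid.closure_induction with
  | mem _ hx => obtain ⟨i, rfl⟩ := hx; exact toR_mem_cone (Set.mem_univ i)
  | zero => convert zero_mem_cone a Set.univ; funext j; simp [toR]
  | add x y _ _ hx hy => rw [toR_add]; exact add_mem_cone hx hy

lemma mem_NFace_of_mem_NA_of_toR_mem_cone {a : Fin n → Lat d} {F : Set (Fin n)}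
    (hF : IsFace a F) {u : Lat d} (hu : u ∈ NA a) (hcone : toR u ∈ cone a F) :
    u ∈ NFace a F := by
  induction hu using AddSubmonoid.closure_induction with
  | mem _ hx =>
    obtain ⟨i, rfl⟩ := hx
    exact AddSubmonoid.subset_closure ⟨i, hF.2 i hcone, rfl⟩
  | zero => exact zero_mem _
  | add x y hx hy ihx ihy =>
    rw [toR_add] at hcone
    obtain ⟨hxF, hyF⟩ := hF.1 _ _ (toR_mem_cone_univ_of_mem_NA hx)
      (toR_mem_cone_univ_of_mem_NA hy) hcone
    exact add_mem (ihx hxF) (ihy hyF)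

lemma exists_real_coeffs_of_toC_mem_CFace {a : Fin n → Lat d} {F : Set (Fin n)} {z : Lat d}
    (hz : toC z ∈ CFace a F) :
    ∃ c : Fin n → ℝ, (∀ i ∉ F, c i = 0) ∧ toR z = ∑ i, c i • toR (a i) := by
  rw [CFace, ← Set.image_comp, Finsupp.mem_span_image_iff_linearCombination] at hz
  obtain ⟨l, hlF, hl⟩ := hz
  refine ⟨fun i => (l i).re, fun i hi => by simp [(Finsupp.mem_supported' ℂ l).mp hlF i hi], ?_⟩
  funext j
  have hj := congrArg (fun v => (v j).re) hl
  simp only [Finsupp.linearCombination_apply, Function.comp_apply, zero_smul, implies_true,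
    Finsupp.sum_fintype, Finset.sum_apply, Pi.smul_apply, toC, smul_eq_mul, Complex.re_sum,
    Complex.mul_re, Complex.intCast_re, Complex.intCast_im, mul_zero, sub_zero] at hj
  simp [toR, ← hj]

lemma exists_add_nsmul_sigmaF_mem_cone (a : Fin n → Lat d) {F : Set (Fin n)} {c : Fin n → ℝ}
    (hc : ∀ i ∉ F, c i = 0) :
    ∃ N : ℕ, ∑ i, c i • toR (a i) + (N : ℝ) • toR (sigmaF a F) ∈ cone a F := by
  obtain ⟨N, hN⟩ := exists_nat_ge ‖c‖
  refine ⟨N, fun i => c i + if i ∈ F then (N : ℝ) else 0, fun i => ?_, fun i hi => ?_, ?_⟩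
  · by_cases hi : i ∈ F
    · have hci : -c i ≤ N := (neg_le_abs (c i)).trans ((norm_le_pi_norm c i).trans hN)
      simp only [hi, if_true]
      linarith
    · simp [hi, hc i hi]
  · simp [hi, hc i hi]
  · simp [toR_sigmaF, Finset.smul_sum, add_smul, Finset.sum_add_distrib]

lemma sigmaF_mem_NFace (a : Fin n → Lat d) (F : Set (Fin n)) : sigmaF a F ∈ NFace a F :=
  sum_mem fun i _ => by
    split_ifs with hi
    · exact AddSubmonoid.subset_closure ⟨i, hi, rfl⟩
    · exact zero_mem _

lemma mem_ZFace_of_mem_NFace {a : Fin n → Lat d} {F : Set (Fin n)} {x : Lat d}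
    (hx : x ∈ NFace a F) : x ∈ ZFace a F :=
  AddSubmonoid.closure_le (S := (ZFace a F).toAddSubmonoid) |>.mpr AddSubgroup.subset_closure hx

lemma mem_ZFace_of_toC_mem_CFace {a : Fin n → Lat d} (hNorm : Normal a) {F : Set (Fin n)}
    (hF : IsFace a F) {z : Lat d} (hz : toC z ∈ CFace a F) : z ∈ ZFace a F := by
  obtain ⟨c, hcF, hzc⟩ := exists_real_coeffs_of_toC_mem_CFace hz
  obtain ⟨N, hN⟩ := exists_add_nsmul_sigmaF_mem_cone a hcF
  rw [← hzc, ← toR_nsmul, ← toR_add] at hN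
  have hshift : z + N • sigmaF a F ∈ NFace a F :=
    mem_NFace_of_mem_NA_of_toR_mem_cone hF
      ((hNorm _).mpr (cone_mono a (Set.subset_univ F) hN)) hN
  have hsigma : N • sigmaF a F ∈ NFace a F := nsmul_mem (sigmaF_mem_NFace a F) N
  simpa using sub_mem (mem_ZFace_of_mem_NFace hshift) (mem_ZFace_of_mem_NFace hsigma)

theorem EF_subsingleton_of_normal_general
    {d n : ℕ} (a : Fin n → Lat d)
    (hNorm : Normal a)
    (F : Set (Fin n)) (hF : IsFace a F)
    (β lam lam' : CS d) (hlam : lam ∈ CFace a F) (hlam' : lam' ∈ CFace a F)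
    (h1 : ∃ γ ∈ NAmNF a F, toC γ = β - lam)
    (h2 : ∃ γ ∈ NAmNF a F, toC γ = β - lam') :
    ∃ z ∈ ZFace a F, toC z = lam - lam' := by
  obtain ⟨γ, -, hγ⟩ := h1
  obtain ⟨γ', -, hγ'⟩ := h2
  have hdiff : toC (γ' - γ) = lam - lam' := by rw [toC_sub, hγ, hγ']; abel
  refine ⟨γ' - γ, mem_ZFace_of_toC_mem_CFace hNorm hF ?_, hdiff⟩
  rw [hdiff]
  exact sub_mem hlam hlam'

/-- Assume ℕA is normal.  If `λ, λ' ∈ ℂF` satisfy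
`β − λ ∈ ℕA − ℕF` and `β − λ' ∈ ℕA − ℕF`, then `λ − λ' ∈ ℤF`; in particular the set
E_F(β) ⊆ ℂF/ℤF has at most one element. -/
theorem EF_subsingleton_of_normal
    {d n : ℕ} (hd : 0 < d) (hn : 0 < n) (a : Fin n → Lat d)
    (hZA : SpansZ a) (hPt : Pointed a) (hNorm : Normal a)
    (F : Set (Fin n)) (hF : IsFace a F)
    (β lam lam' : CS d) (hlam : lam ∈ CFace a F) (hlam' : lam' ∈ CFace a F)
    (h1 : ∃ γ ∈ NAmNF a F, toC γ = β - lam)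
    (h2 : ∃ γ ∈ NAmNF a F, toC γ = β - lam') :
    ∃ z ∈ ZFace a F, toC z = lam - lam' :=
  EF_subsingleton_of_normal_general a hNorm F hF β lam lam' hlam hlam' h1 h2

end

end GKZ
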